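/- For independent real-valued random variables X and Y with finite first moments and cumulative distribution functions F and G respectively, 2E|X-Y| - E|X-X'| - E|Y-Y'| = 2∫_{-∞}^{∞} (F(t) - G(t))^2 dt. -/

import Mathlib

open MeasureTheory ProbabilityTheory Set
open scoped ENNReal

/-! Write `|x - y| = ∫ (𝟙[x ≤ t < y] + 𝟙[y ≤ t < x]) dt`. By Tonelli under the joint law of
`(X, Y)`, which independence makes the product of the marginals, this gives
`E|X - Y| = ∫ F (1 - G) + G (1 - F)`. Taking the three such identities together, the integrand
`2 (F (1 - G) + G (1 - F)) - 2 F (1 - F) - 2 G (1 - G)` is exactly `2 (F - G)²`. -/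

theorem lintegral_ofReal_sub_prod (P Q : Measure ℝ) [SFinite P] [SFinite Q] :
    ∫⁻ p, ENNReal.ofReal (p.2 - p.1) ∂P.prod Q = ∫⁻ t, P (Iic t) * Q (Ioi t) := by
  have hslice : ∀ (p : ℝ × ℝ) t,
      (Ico p.1 p.2).indicator (1 : ℝ → ℝ≥0∞) t = (Iic t ×ˢ Ioi t).indicator 1 p := by
    intro p t
    simp only [indicator_apply, mem_Ico, mem_prod, mem_Iic, mem_Ioi, Pi.one_apply]
  have hmeas : Measurable
      (Function.uncurry fun (p : ℝ × ℝ) t ↦ (Ico p.1 p.2).indicator (1 : ℝ → ℝ≥0∞) t) :=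
    measurable_const.indicator <|
      (measurableSet_le (f := fun q : (ℝ × ℝ) × ℝ ↦ q.1.1) (by fun_prop) (by fun_prop)).inter
        (measurableSet_lt (g := fun q : (ℝ × ℝ) × ℝ ↦ q.1.2) (by fun_prop) (by fun_prop))
  calc ∫⁻ p, ENNReal.ofReal (p.2 - p.1) ∂P.prod Q
      = ∫⁻ p, (∫⁻ t, (Ico p.1 p.2).indicator 1 t) ∂P.prod Q := by
        simp only [lintegral_indicator_one measurableSet_Ico, Real.volume_Ico]
    _ = ∫⁻ t, ∫⁻ p : ℝ × ℝ, (Ico p.1 p.2).indicator 1 t ∂P.prod Q :=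
        lintegral_lintegral_swap hmeas.aemeasurable
    _ = ∫⁻ t, P (Iic t) * Q (Ioi t) := by
        simp only [hslice, lintegral_indicator_one (measurableSet_Iic.prod measurableSet_Ioi),
          Measure.prod_prod]

theorem ENNReal.ofReal_abs_sub (a b : ℝ) :
    ENNReal.ofReal |a - b| = ENNReal.ofReal (b - a) + ENNReal.ofReal (a - b) := by
  rcases le_total a b with h | h
  · rw [abs_sub_comm, abs_of_nonneg (sub_nonneg.2 h), ENNReal.ofReal_of_nonpos (sub_nonpos.2 h),
      add_zero]
  · rw [abs_of_nonneg (sub_nonneg.2 h), ENNReal.ofReal_of_nonpos (sub_nonpos.2 h), zero_add]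

theorem measurable_measure_Iic_mul_measure_Ioi (P Q : Measure ℝ) :
    Measurable fun t ↦ P (Iic t) * Q (Ioi t) :=
  (Monotone.measurable fun _ _ h ↦ measure_mono (Iic_subset_Iic.2 h)).mul
    (Antitone.measurable fun _ _ h ↦ measure_mono (Ioi_subset_Ioi h))

theorem lintegral_ofReal_abs_sub_prod (P Q : Measure ℝ) [SFinite P] [SFinite Q] :
    ∫⁻ p, ENNReal.ofReal |p.1 - p.2| ∂P.prod Q
      = ∫⁻ t, (P (Iic t) * Q (Ioi t) + Q (Iic t) * P (Ioi t)) := by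
  have hswap : ∫⁻ p, ENNReal.ofReal (p.1 - p.2) ∂P.prod Q
      = ∫⁻ p, ENNReal.ofReal (p.2 - p.1) ∂Q.prod P :=
    lintegral_prod_swap (fun p : ℝ × ℝ ↦ ENNReal.ofReal (p.2 - p.1))
  simp only [ENNReal.ofReal_abs_sub]
  rw [lintegral_add_left (by fun_prop), hswap, lintegral_ofReal_sub_prod, lintegral_ofReal_sub_prod,
    lintegral_add_left (measurable_measure_Iic_mul_measure_Ioi P Q)]

section Probability

variable (P Q : Measure ℝ) [IsProbabilityMeasure P] [IsProbabilityMeasure Q]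

theorem measureReal_Ioi_eq_one_sub_cdf (t : ℝ) :
    P.real (Ioi t) = 1 - cdf P t := by
  rw [← compl_Iic, measureReal_compl measurableSet_Iic, probReal_univ, cdf_eq_real]

theorem toReal_measure_Iic_mul_measure_Ioi_add (t : ℝ) :
    (P (Iic t) * Q (Ioi t) + Q (Iic t) * P (Ioi t)).toReal
      = cdf P t * (1 - cdf Q t) + cdf Q t * (1 - cdf P t) := by
  rw [ENNReal.toReal_add (by finiteness) (by finiteness), ENNReal.toReal_mul, ENNReal.toReal_mul]
  simp only [← measureReal_def, measureReal_Ioi_eq_one_sub_cdf, cdf_eq_real]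

theorem integral_abs_sub_prod_eq_integral_cdf :
    ∫ p, |p.1 - p.2| ∂P.prod Q = ∫ t, (cdf P t * (1 - cdf Q t) + cdf Q t * (1 - cdf P t)) := by
  rw [integral_eq_lintegral_of_nonneg_ae (ae_of_all _ fun _ ↦ abs_nonneg _) (by fun_prop),
    lintegral_ofReal_abs_sub_prod, ← integral_toReal
      (f := fun t ↦ P (Iic t) * Q (Ioi t) + Q (Iic t) * P (Ioi t))
      ((measurable_measure_Iic_mul_measure_Ioi P Q).add
        (measurable_measure_Iic_mul_measure_Ioi Q P)).aemeasurable
      (ae_of_all _ fun _ ↦ by finiteness)]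
  simp only [toReal_measure_Iic_mul_measure_Ioi_add]

variable {P Q} in
theorem integrable_cdf_mul_one_sub_cdf_add (hP : Integrable id P) (hQ : Integrable id Q) :
    Integrable fun t ↦ cdf P t * (1 - cdf Q t) + cdf Q t * (1 - cdf P t) := by
  simp only [← toReal_measure_Iic_mul_measure_Ioi_add]
  refine integrable_toReal_of_lintegral_ne_top
    ((measurable_measure_Iic_mul_measure_Ioi P Q).add
        (measurable_measure_Iic_mul_measure_Ioi Q P)).aemeasurable ?_
  rw [← lintegral_ofReal_abs_sub_prod]
  exact ((hP.comp_fst Q).sub (hQ.comp_snd P)).abs.lintegral_lt_top.ne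

noncomputable def energyDistance (P Q : Measure ℝ) : ℝ :=
  2 * ∫ p, |p.1 - p.2| ∂P.prod Q - ∫ p, |p.1 - p.2| ∂P.prod P - ∫ p, |p.1 - p.2| ∂Q.prod Q

variable {P Q} in
theorem energyDistance_eq_two_mul_integral_sq_cdf_sub (hP : Integrable id P)
    (hQ : Integrable id Q) :
    energyDistance P Q = 2 * ∫ t, (cdf P t - cdf Q t) ^ 2 := by
  have hPQ := integrable_cdf_mul_one_sub_cdf_add hP hQ
  have hPP := integrable_cdf_mul_one_sub_cdf_add hP hP
  have hQQ := integrable_cdf_mul_one_sub_cdf_add hQ hQ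
  have hpointwise : ∀ t, 2 * (cdf P t - cdf Q t) ^ 2
      = 2 * (cdf P t * (1 - cdf Q t) + cdf Q t * (1 - cdf P t))
        - (cdf P t * (1 - cdf P t) + cdf P t * (1 - cdf P t))
        - (cdf Q t * (1 - cdf Q t) + cdf Q t * (1 - cdf Q t)) := fun t ↦ by ring
  rw [energyDistance, integral_abs_sub_prod_eq_integral_cdf P Q,
    integral_abs_sub_prod_eq_integral_cdf P P, integral_abs_sub_prod_eq_integral_cdf Q Q,
    ← integral_const_mul 2 fun t ↦ (cdf P t - cdf Q t) ^ 2]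
  simp only [hpointwise]
  rw [integral_sub _ hQQ, integral_sub (hPQ.const_mul 2) hPP, integral_const_mul]
  exact (hPQ.const_mul 2).sub hPP

end Probability

theorem ProbabilityTheory.IndepFun.integral_abs_sub_eq {Ω : Type*} [MeasurableSpace Ω]
    {μ : Measure Ω} [IsFiniteMeasure μ] {X Y : Ω → ℝ} (hXY : IndepFun X Y μ)
    (hX : AEMeasurable X μ) (hY : AEMeasurable Y μ) :
    ∫ ω, |X ω - Y ω| ∂μ = ∫ p, |p.1 - p.2| ∂(μ.map X).prod (μ.map Y) := by
  rw [← hXY.map_prod_eq_prod_map_map hX hY, integral_map (hX.prodMk hY) (by fun_prop)]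

/-- Cramér–von Mises representation of the energy distance: for independent
integrable real random variables `X, Y` with cdfs `F, G` and independent copies
`X', Y'`, `2E|X-Y| - E|X-X'| - E|Y-Y'| = 2∫ (F t - G t)² dt`. -/
theorem energy_distance_eq_two_int_sq_cdf_diff
    {Ω : Type*} [MeasurableSpace Ω] {μ : Measure Ω} [IsProbabilityMeasure μ]
    (X Y X' Y' : Ω → ℝ)
    (hIndep : iIndepFun ![X, Y, X', Y'] μ)
    (hX' : IdentDistrib X' X μ μ) (hY' : IdentDistrib Y' Y μ μ)
    (hX1 : Integrable X μ) (hY1 : Integrable Y μ)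
    (F G : ℝ → ℝ)
    (hF : ∀ t, F t = ((μ.map X) (Set.Iic t)).toReal)
    (hG : ∀ t, G t = ((μ.map Y) (Set.Iic t)).toReal) :
    2 * ∫ ω, |X ω - Y ω| ∂μ - ∫ ω, |X ω - X' ω| ∂μ - ∫ ω, |Y ω - Y' ω| ∂μ
      = 2 * ∫ t : ℝ, (F t - G t) ^ 2 := by
  have hX := hX1.aemeasurable
  have hY := hY1.aemeasurable
  have := Measure.isProbabilityMeasure_map (μ := μ) hX
  have := Measure.isProbabilityMeasure_map (μ := μ) hY
  have hF_cdf : F = cdf (μ.map X) := funext fun t ↦ by rw [hF, cdf_eq_real, measureReal_def]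
  have hG_cdf : G = cdf (μ.map Y) := funext fun t ↦ by rw [hG, cdf_eq_real, measureReal_def]
  have hXY : IndepFun X Y μ := hIndep.indepFun (i := 0) (j := 1) (by decide)
  have hXX' : IndepFun X X' μ := hIndep.indepFun (i := 0) (j := 2) (by decide)
  have hYY' : IndepFun Y Y' μ := hIndep.indepFun (i := 1) (j := 3) (by decide)
  rw [hXY.integral_abs_sub_eq hX hY, hXX'.integral_abs_sub_eq hX hX'.aemeasurable_fst,
    hYY'.integral_abs_sub_eq hY hY'.aemeasurable_fst,
    hX'.map_eq, hY'.map_eq, hF_cdf, hG_cdf]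
  exact energyDistance_eq_two_mul_integral_sq_cdf_sub
    ((integrable_map_measure aestronglyMeasurable_id hX).2 hX1)
    ((integrable_map_measure aestronglyMeasurable_id hY).2 hY1)
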